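/- The doubling-type condition is necessary for the small-ball conditions used in functional regression (Lemma B.3). Let P_X be a probability measure on a metric space, x a point of its support, and B(x,h) = {X : ‖x − X‖ ≤ h} the closed ball of radius h. (a) If for every ε > 0 the ratio τ_h(ε) = P_X(B(x,εh))/P_X(B(x,h)) converges as h → 0 to a limit τ₀(ε) > 0, then there exist 0 < ε < 1 and a constant 1 < C_ε < ∞ such that P_X(B(x,h))/P_X(B(x,εh)) < C_ε for all sufficiently small h > 0. (b) If there exist C > 0 and v₀ > 0 such that ∫₀^v P_X(B(x,u)) du > C·v·P_X(B(x,v)) for every 0 < v < v₀, then likewise there exist 0 < ε < 1 and 1 < C_ε < ∞ with P_X(B(x,h))/P_X(B(x,εh)) < C_ε for all sufficiently small h > 0. -/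

import Mathlib

open MeasureTheory Filter Topology

namespace PaperNW

/-- Mixed partial derivative of `f` along the list of coordinates `L`. -/
noncomputable def mixedPartial {q : ℕ} : List (Fin q) → ((Fin q → ℝ) → ℝ) → (Fin q → ℝ) → ℝ
  | [], f => f
  | j :: L, f => fun w => deriv (fun t => mixedPartial L f (Function.update w j t)) (w j)

/-- `f` is *sufficiently differentiable*: every mixed partial derivative (over any collection
of coordinates) exists and is continuous at any point of the interior of the support. -/
def SuffDiff {q : ℕ} (f : (Fin q → ℝ) → ℝ) : Prop :=
  ∀ L : List (Fin q),
    ContinuousOn (mixedPartial L f) (interior (tsupport f)) ∧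
      ∀ w ∈ interior (tsupport f), ∀ j : Fin q,
        DifferentiableAt ℝ (fun t : ℝ => mixedPartial L f (Function.update w j t)) (w j)

/-- The operator `Δ_{1,ξ}`: the mixed partial derivative over the coordinates of `I` times
`(-1)^{|I|}`, with the coordinates outside of `I` set equal to `1`. -/
noncomputable def deltaOp {q : ℕ} (I : Finset (Fin q)) (f : (Fin q → ℝ) → ℝ)
    (v : Fin q → ℝ) : ℝ :=
  (-1 : ℝ) ^ I.card *
    mixedPartial (I.sort (· ≤ ·)) f (fun j => if j ∈ I then v j else 1)

/-- The cuboid `C(x,h)` in a product of (semi-)metric spaces. -/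
def cuboid {q : ℕ} {Ξ : Fin q → Type*} [∀ l, PseudoMetricSpace (Ξ l)]
    (x : ∀ l, Ξ l) (h : Fin q → ℝ) : Set (∀ l, Ξ l) :=
  {z | ∀ l, dist (z l) (x l) ≤ h l}

/-- The vector of componentwise distances scaled by the bandwidth: `W_X(x) = ‖x-X‖/h`. -/
noncomputable def Wvec {q : ℕ} {Ξ : Fin q → Type*} [∀ l, PseudoMetricSpace (Ξ l)]
    (x : ∀ l, Ξ l) (h : Fin q → ℝ) (z : ∀ l, Ξ l) : Fin q → ℝ :=
  fun l => dist (x l) (z l) / h l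

/-- The kernel assumption (Assumption 2 (a)-(c)): a nonnegative sufficiently differentiable
density, nonincreasing in each coordinate on the nonnegative orthant, either symmetric about
zero with support `[-1,1]^q` or supported on `[0,1]^q`. -/
structure IsKernel {q : ℕ} (K : (Fin q → ℝ) → ℝ) : Prop where
  nonneg : ∀ w, 0 ≤ K w
  suffDiff : SuffDiff K
  integral_one : (∫ w : Fin q → ℝ, K w) = 1
  antitone_orthant : ∀ w w' : Fin q → ℝ, (∀ j, 0 ≤ w j) → (∀ j, w j ≤ w' j) → K w' ≤ K w
  support_cases :
    ((∀ (w : Fin q → ℝ) (j : Fin q), K (Function.update w j (-w j)) = K w) ∧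
        Function.support K ⊆ Set.univ.pi fun _ => Set.Icc (-1 : ℝ) 1) ∨
      Function.support K ⊆ Set.univ.pi fun _ => Set.Icc (0 : ℝ) 1

/-- The doubling (small cube probability) Assumption 5 at the point `x`. -/
def Doubling {q : ℕ} {Ξ : Fin q → Type*} [∀ l, PseudoMetricSpace (Ξ l)]
    [∀ l, MeasurableSpace (Ξ l)] (ν : Measure (∀ l, Ξ l)) (x : ∀ l, Ξ l) : Prop :=
  ∃ ε Cε : ℝ, 0 < ε ∧ ε < 1 ∧ 1 < Cε ∧
    ∀ h : Fin q → ℝ, (∀ l, 0 < h l) →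
      (ν (cuboid x h)).toReal < Cε * (ν (cuboid x fun l => ε * h l)).toReal

/-- The strong mixing coefficient `α(l)` of a process `Z`. -/
noncomputable def alphaMix {Ω : Type*} [MeasurableSpace Ω] (P : Measure Ω)
    {E : Type*} [MeasurableSpace E] (Z : ℕ → Ω → E) (l : ℕ) : ℝ :=
  sSup {r : ℝ | ∃ (t : ℕ) (A B : Set Ω),
    MeasurableSet[⨆ i ∈ Set.Iic t, MeasurableSpace.comap (Z i) inferInstance] A ∧
      MeasurableSet[⨆ i ∈ Set.Ici (t + l), MeasurableSpace.comap (Z i) inferInstance] B ∧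
      r = |(P (A ∩ B)).toReal - (P A).toReal * (P B).toReal|}

/-- Assumption 3 (data generating process and moments), together with the regression model. -/
structure DGPAssumptions {q : ℕ} {Ω : Type*} [MeasurableSpace Ω] (P : Measure Ω)
    {Ξ : Fin q → Type*} [∀ l, PseudoMetricSpace (Ξ l)] [∀ l, MeasurableSpace (Ξ l)]
    (X : ℕ → Ω → ∀ l, Ξ l) (Y u : ℕ → Ω → ℝ)
    (m μ₂ : (∀ l, Ξ l) → ℝ) (x : ∀ l, Ξ l) (ζ : ℝ) : Prop where
  zeta_pos : 0 < ζ
  meas_X : ∀ i, Measurable (X i)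
  meas_Y : ∀ i, Measurable (Y i)
  model : ∀ i ω, Y i ω = m (X i ω) + u i ω
  stationary : ∀ k : ℕ,
    P.map (fun ω => fun i : ℕ => (X (i + k) ω, Y (i + k) ω)) =
      P.map (fun ω => fun i : ℕ => (X i ω, Y i ω))
  mixing : ∃ C κ : ℝ, 2 * (2 + ζ) / ζ < κ ∧
    ∀ k : ℕ, 0 < k → alphaMix P (fun i ω => (X i ω, Y i ω)) k ≤ C * (k : ℝ) ^ (-κ)
  cond_mean_zero : ∀ i,
    P[u i|MeasurableSpace.comap (X i) inferInstance] =ᵐ[P] 0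
  cond_var : ∀ i,
    P[fun ω => u i ω ^ 2|MeasurableSpace.comap (X i) inferInstance] =ᵐ[P]
      fun ω => μ₂ (X i ω)
  mu2_bounds : ∃ L M : ℝ, 0 < L ∧ ∀ z, L ≤ μ₂ z ∧ μ₂ z ≤ M
  mu2_cont : ∃ U ∈ 𝓝 x, ContinuousOn μ₂ U
  Y_moment : ∀ i, Integrable (fun ω => |Y i ω| ^ (2 + ζ)) P
  u_cond_moment : ∃ ν : (∀ l, Ξ l) → ℝ, ∀ i,
    P[fun ω => abs (u i ω) ^ (2 + ζ)|MeasurableSpace.comap (X i) inferInstance] =ᵐ[P]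
      fun ω => ν (X i ω)
  uu_cond_cont : ∃ μp : ((∀ l, Ξ l) × (∀ l, Ξ l)) → ℝ,
    (∀ i j, i ≠ j →
      P[fun ω => abs (u i ω * u j ω)|MeasurableSpace.comap
          (fun ω => (X i ω, X j ω)) inferInstance] =ᵐ[P]
        fun ω => μp (X i ω, X j ω)) ∧
    ∃ U ∈ 𝓝 (x, x), ContinuousOn μp U
  YY_cond_bdd : ∃ C : ℝ, ∀ i j, ∀ᵐ ω ∂P,
    (P[fun ω' => abs (Y i ω' * Y j ω')|MeasurableSpace.comap
        (fun ω' => (X i ω', X j ω')) inferInstance]) ω ≤ C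

/-- The denominator `B_n(x)` of the Nadaraya-Watson estimator. -/
noncomputable def Bn {q : ℕ} {Ω : Type*} {Ξ : Fin q → Type*} [∀ l, PseudoMetricSpace (Ξ l)]
    (K : (Fin q → ℝ) → ℝ) (X : ℕ → Ω → ∀ l, Ξ l) (x : ∀ l, Ξ l) (h : Fin q → ℝ)
    (n : ℕ) (ω : Ω) : ℝ :=
  (∑ i ∈ Finset.range n, K (Wvec x h (X i ω))) / n

/-- The numerator `A_n(x)` of the Nadaraya-Watson estimator. -/
noncomputable def An {q : ℕ} {Ω : Type*} {Ξ : Fin q → Type*} [∀ l, PseudoMetricSpace (Ξ l)]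
    (K : (Fin q → ℝ) → ℝ) (X : ℕ → Ω → ∀ l, Ξ l) (Y : ℕ → Ω → ℝ) (x : ∀ l, Ξ l)
    (h : Fin q → ℝ) (n : ℕ) (ω : Ω) : ℝ :=
  (∑ i ∈ Finset.range n, K (Wvec x h (X i ω)) * Y i ω) / n

/-- The Nadaraya-Watson estimator `m̂(x) = A_n(x)/B_n(x)`. -/
noncomputable def mhat {q : ℕ} {Ω : Type*} {Ξ : Fin q → Type*} [∀ l, PseudoMetricSpace (Ξ l)]
    (K : (Fin q → ℝ) → ℝ) (X : ℕ → Ω → ∀ l, Ξ l) (Y : ℕ → Ω → ℝ) (x : ∀ l, Ξ l)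
    (h : Fin q → ℝ) (n : ℕ) (ω : Ω) : ℝ :=
  An K X Y x h n ω / Bn K X x h n ω

/-- Convergence in distribution of real random variables (convergence of the cdf at every
point; for a normal limit every point is a continuity point of the limiting cdf). -/
def TendstoInDistrib {Ω : Type*} [MeasurableSpace Ω] (P : Measure Ω)
    (Z : ℕ → Ω → ℝ) (μ : Measure ℝ) : Prop :=
  ∀ t : ℝ, Tendsto (fun n => (P {ω | Z n ω ≤ t}).toReal) atTop (𝓝 ((μ (Set.Iic t)).toReal))

def EventuallyDoubling (F : ℝ → ℝ) : Prop :=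
  ∃ ε Cε : ℝ, 0 < ε ∧ ε < 1 ∧ 1 < Cε ∧ ∃ h₀ : ℝ, 0 < h₀ ∧ ∀ h : ℝ, 0 < h → h < h₀ →
    F h / F (ε * h) < Cε

theorem exists_pos_forall_lt_of_eventually_nhdsGT_zero {p : ℝ → Prop}
    (hp : ∀ᶠ h in 𝓝[>] (0 : ℝ), p h) : ∃ h₀ : ℝ, 0 < h₀ ∧ ∀ h : ℝ, 0 < h → h < h₀ → p h := by
  obtain ⟨h₀, hh₀, hsub⟩ := mem_nhdsGT_iff_exists_Ioo_subset.mp hp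
  exact ⟨h₀, hh₀, fun h hpos hlt => hsub ⟨hpos, hlt⟩⟩

theorem eventuallyDoubling_of_tendsto_ratio {F : ℝ → ℝ} {ε τ : ℝ} (hε₀ : 0 < ε) (hε₁ : ε < 1)
    (hτ : 0 < τ) (hlim : Tendsto (fun h => F (ε * h) / F h) (𝓝[>] 0) (𝓝 τ)) :
    EventuallyDoubling F := by
  have hinv : Tendsto (fun h => F h / F (ε * h)) (𝓝[>] 0) (𝓝 τ⁻¹) := by
    simpa only [inv_div] using hlim.inv₀ hτ.ne'
  obtain ⟨h₀, hh₀, hbound⟩ := exists_pos_forall_lt_of_eventually_nhdsGT_zero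
    (hinv.eventually (gt_mem_nhds (lt_add_one τ⁻¹)))
  exact ⟨ε, τ⁻¹ + 1, hε₀, hε₁, lt_add_of_pos_left 1 (inv_pos.mpr hτ), h₀, hh₀, hbound⟩

theorem _root_.Monotone.intervalIntegral_le_mul_right {F : ℝ → ℝ} (hF : Monotone F) {a b : ℝ}
    (hab : a ≤ b) : ∫ u in a..b, F u ≤ (b - a) * F b := by
  calc ∫ u in a..b, F u ≤ ∫ _ in a..b, F b :=
        intervalIntegral.integral_mono_on hab hF.intervalIntegrable intervalIntegrable_const
          fun u hu => hF hu.2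
    _ = (b - a) * F b := by simp

theorem _root_.Monotone.setIntegral_Ioc_le_add {F : ℝ → ℝ} (hF : Monotone F) {a b c : ℝ}
    (hac : a ≤ c) (hcb : c ≤ b) :
    ∫ u in Set.Ioc a b, F u ≤ (c - a) * F c + (b - c) * F b := by
  rw [← intervalIntegral.integral_of_le (hac.trans hcb),
    ← intervalIntegral.integral_add_adjacent_intervals hF.intervalIntegrable
      hF.intervalIntegrable]
  exact add_le_add (hF.intervalIntegral_le_mul_right hac) (hF.intervalIntegral_le_mul_right hcb)

/-- With `ε = 1 - C/2`, splitting `∫₀^v F` at `εv` and bounding `F` on each piece by its value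
at the right end gives `C/2 · F v < ε · F (εv)`, i.e. the doubling bound with `Cε = 2ε/C`. -/
theorem eventuallyDoubling_of_mul_lt_setIntegral {F : ℝ → ℝ} (hF : Monotone F)
    (hF₀ : ∀ u, 0 ≤ F u) {C v₀ : ℝ} (hC : 0 < C) (hv₀ : 0 < v₀)
    (hint : ∀ v : ℝ, 0 < v → v < v₀ → C * v * F v < ∫ u in Set.Ioc (0 : ℝ) v, F u) :
    EventuallyDoubling F := by
  have hC₁ : C < 1 := by
    have hv : 0 < v₀ / 2 := half_pos hv₀
    have hlt := hint (v₀ / 2) hv (half_lt_self hv₀)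
    have hle := hF.setIntegral_Ioc_le_add hv.le le_rfl
    simp only [sub_zero, sub_self, zero_mul, add_zero] at hle
    nlinarith [mul_nonneg hv.le (hF₀ (v₀ / 2))]
  set ε := 1 - C / 2 with hε
  have hε₀ : 0 < ε := by linarith
  have hε₁ : ε < 1 := by linarith
  refine ⟨ε, 2 * ε / C, hε₀, hε₁, ?_, v₀, hv₀, fun v hv hvv₀ => ?_⟩
  · rw [lt_div_iff₀ hC]
    linarith
  have hεv : 0 < ε * v := mul_pos hε₀ hv
  have hsplit := hF.setIntegral_Ioc_le_add hεv.le (mul_le_of_le_one_left hv.le hε₁.le)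
  have hkey : C / 2 * F v < ε * F (ε * v) := by
    have hlt := hint v hv hvv₀
    refine lt_of_mul_lt_mul_left (a := v) ?_ hv.le
    have hrest : (v - ε * v) * F v = C / 2 * v * F v := by rw [hε]; ring
    linarith
  have hFεv : 0 < F (ε * v) :=
    pos_of_mul_pos_right ((mul_nonneg (half_pos hC).le (hF₀ v)).trans_lt hkey) hε₀.le
  rw [div_lt_iff₀ hFεv, div_mul_eq_mul_div, lt_div_iff₀ hC]
  linarith

theorem doubling_necessary_general
    {M : Type*} [PseudoMetricSpace M] [MeasurableSpace M]
    (P : Measure M) [IsProbabilityMeasure P] (x : M) :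
    -- (a)
    ((∃ τ₀ : ℝ → ℝ, ∀ ε : ℝ, 0 < ε → 0 < τ₀ ε ∧
        Tendsto (fun h => (P (Metric.closedBall x (ε * h))).toReal /
          (P (Metric.closedBall x h)).toReal) (𝓝[>] (0 : ℝ)) (𝓝 (τ₀ ε))) →
      ∃ ε Cε : ℝ, 0 < ε ∧ ε < 1 ∧ 1 < Cε ∧ ∃ h₀ : ℝ, 0 < h₀ ∧ ∀ h : ℝ, 0 < h → h < h₀ →
        (P (Metric.closedBall x h)).toReal /
          (P (Metric.closedBall x (ε * h))).toReal < Cε) ∧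
    -- (b)
    ((∃ C v₀ : ℝ, 0 < C ∧ 0 < v₀ ∧ ∀ v : ℝ, 0 < v → v < v₀ →
        C * v * (P (Metric.closedBall x v)).toReal <
          ∫ u in Set.Ioc (0 : ℝ) v, (P (Metric.closedBall x u)).toReal) →
      ∃ ε Cε : ℝ, 0 < ε ∧ ε < 1 ∧ 1 < Cε ∧ ∃ h₀ : ℝ, 0 < h₀ ∧ ∀ h : ℝ, 0 < h → h < h₀ →
        (P (Metric.closedBall x h)).toReal /
          (P (Metric.closedBall x (ε * h))).toReal < Cε) := by
  have hmono : Monotone fun h => (P (Metric.closedBall x h)).toReal := fun _ _ hab =>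
    ENNReal.toReal_mono (measure_ne_top P _)
      (measure_mono (Metric.closedBall_subset_closedBall hab))
  refine ⟨fun ⟨τ₀, hτ₀⟩ => ?_, fun ⟨C, v₀, hC, hv₀, hint⟩ => ?_⟩
  · obtain ⟨hpos, hlim⟩ := hτ₀ (1 / 2) one_half_pos
    exact eventuallyDoubling_of_tendsto_ratio one_half_pos one_half_lt_one hpos hlim
  · exact eventuallyDoubling_of_mul_lt_setIntegral hmono (fun _ => ENNReal.toReal_nonneg)
      hC hv₀ hint

/-- **Lemma B.3**: the doubling-type condition (Assumption 5) is necessary both for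
Assumption `H₃` of Ferraty, Mas and Vieu (2007) (part (a)) and for the condition of
Lemma 4.4 of Ferraty and Vieu (2006) (part (b)). -/
theorem doubling_necessary
    {M : Type*} [PseudoMetricSpace M] [MeasurableSpace M]
    (P : Measure M) [IsProbabilityMeasure P] (x : M)
    (hsupp : ∀ h : ℝ, 0 < h → 0 < P (Metric.closedBall x h)) :
    -- (a)
    ((∃ τ₀ : ℝ → ℝ, ∀ ε : ℝ, 0 < ε → 0 < τ₀ ε ∧
        Tendsto (fun h => (P (Metric.closedBall x (ε * h))).toReal /
          (P (Metric.closedBall x h)).toReal) (𝓝[>] (0 : ℝ)) (𝓝 (τ₀ ε))) →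
      ∃ ε Cε : ℝ, 0 < ε ∧ ε < 1 ∧ 1 < Cε ∧ ∃ h₀ : ℝ, 0 < h₀ ∧ ∀ h : ℝ, 0 < h → h < h₀ →
        (P (Metric.closedBall x h)).toReal /
          (P (Metric.closedBall x (ε * h))).toReal < Cε) ∧
    -- (b)
    ((∃ C v₀ : ℝ, 0 < C ∧ 0 < v₀ ∧ ∀ v : ℝ, 0 < v → v < v₀ →
        C * v * (P (Metric.closedBall x v)).toReal <
          ∫ u in Set.Ioc (0 : ℝ) v, (P (Metric.closedBall x u)).toReal) →
      ∃ ε Cε : ℝ, 0 < ε ∧ ε < 1 ∧ 1 < Cε ∧ ∃ h₀ : ℝ, 0 < h₀ ∧ ∀ h : ℝ, 0 < h → h < h₀ →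
        (P (Metric.closedBall x h)).toReal /
          (P (Metric.closedBall x (ε * h))).toReal < Cε) :=
  doubling_necessary_general P x

end PaperNW
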